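/- Let S be a subalgebra of M_N(W), where W is the first Weyl algebra over an algebraically closed field k of characteristic zero, such that ∂_q(S) ⊆ S and p·S ⊆ S. If the natural action of S on the free module V_N = (k[p])^N has no nontrivial S-invariant subspaces, then the centralizer of S in End_k(V_N) consists exactly of the scalar multiples of the identity. -/
import Mathlib


open Polynomial

set_option synthInstance.maxHeartbeats 1000000
set_option maxHeartbeats 1000000

noncomputable section

variable (k : Type*) [Field k] [CharZero k]

/-- The operator `p`: multiplication by `X` on `k[X]`. -/
def pOp : Module.End k (Polynomial k) := LinearMap.mulLeft k (X : Polynomial k)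

/-- The operator `q = d/dX` on `k[X]`. -/
def qOp : Module.End k (Polynomial k) := derivative

/-- The (first) Weyl algebra, realized concretely as the subalgebra of
`End_k(k[X])` generated by multiplication by `X` and `d/dX`.  (In characteristic
zero this is a faithful model of `k⟨p,q | qp - pq = 1⟩`.) -/
def WeylA : Subalgebra k (Module.End k (Polynomial k)) :=
  Algebra.adjoin k {pOp k, qOp k}

/-- The element `p` of the Weyl algebra. -/
def pW : WeylA k := ⟨pOp k, Algebra.subset_adjoin (Set.mem_insert _ _)⟩

/-- The element `q` of the Weyl algebra. -/
def qW : WeylA k := ⟨qOp k, Algebra.subset_adjoin (Set.mem_insert_of_mem _ rfl)⟩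

variable (N : ℕ)

/-- `M_N(W)`, the `N×N` matrices over the Weyl algebra. -/
abbrev MW := Matrix (Fin N) (Fin N) (WeylA k)

/-- The scalar matrix `p·Id_N`. -/
def pM : MW k N := Matrix.diagonal fun _ => pW k

/-- The scalar matrix `q·Id_N`. -/
def qM : MW k N := Matrix.diagonal fun _ => qW k

/-- The derivation `∂_q(a) = [a,p]` on `M_N(W)`. -/
def dq (a : MW k N) : MW k N := a * pM k N - pM k N * a

/-- Evaluation of a polynomial at `p`, i.e. the embedding `k[p] → W`. -/
def polyP : Polynomial k →ₐ[k] WeylA k := Polynomial.aeval (pW k)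

/-- Evaluation of a polynomial at `q`, i.e. the embedding `k[q] → W`. -/
def polyQ : Polynomial k →ₐ[k] WeylA k := Polynomial.aeval (qW k)


/-- The canonical action of `M_N(W)` on `V_N = (k[p])^N`. -/
def act (N : ℕ) (a : MW k N) (v : Fin N → Polynomial k) : Fin N → Polynomial k :=
  fun i => ∑ j, (a i j : Module.End k (Polynomial k)) (v j)

namespace CentAux

variable {k N}

def actL (a : MW k N) : (Fin N → Polynomial k) →ₗ[k] (Fin N → Polynomial k) where
  toFun v := act k N a v
  map_add' u v := by funext i; simp [act, Finset.sum_add_distrib]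
  map_smul' c v := by funext i; simp [act, Finset.smul_sum]

lemma actL_apply (a : MW k N) (v) : actL a v = act k N a v := rfl

lemma act_mul (a b : MW k N) (v) : act k N (a * b) v = act k N a (act k N b v) := by
  funext i
  simp only [act, Matrix.mul_apply, AddSubmonoidClass.coe_finset_sum,
    MulMemClass.coe_mul, LinearMap.sum_apply, Module.End.mul_apply, map_sum]
  exact Finset.sum_comm

def Pm : (Fin N → Polynomial k) →ₗ[k] (Fin N → Polynomial k) where
  toFun v := fun i => X * v i
  map_add' u v := by funext i; simp [mul_add]
  map_smul' c v := by funext i; simp [mul_smul_comm]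

lemma act_pM (a : MW k N) (v) : act k N (pM k N * a) v = Pm (act k N a v) := by
  funext i
  simp only [act, pM, Matrix.diagonal_mul, MulMemClass.coe_mul, Module.End.mul_apply,
    pW, pOp, LinearMap.mulLeft_apply, Pm, LinearMap.coe_mk, AddHom.coe_mk, Finset.mul_sum]

end CentAux

/-- A subalgebra `S ⊆ M_N(W)` with `∂_q(S) ⊆ S` and `p·S ⊆ S` acting
irreducibly on `V_N` has centralizer `k` in `End_k(V_N)`. -/
theorem centralizer_of_irreducible [IsAlgClosed k] (N : ℕ) (hN : 0 < N)
    (S : NonUnitalSubalgebra k (MW k N))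
    (hdq : ∀ a ∈ S, dq k N a ∈ S)
    (hpS : ∀ a ∈ S, pM k N * a ∈ S)
    (hirr : ∀ U : Submodule k (Fin N → Polynomial k),
      (∀ a ∈ S, ∀ u ∈ U, act k N a u ∈ U) → U = ⊥ ∨ U = ⊤) :
    ∀ φ : (Fin N → Polynomial k) →ₗ[k] (Fin N → Polynomial k),
      (∀ a ∈ S, ∀ v : Fin N → Polynomial k, φ (act k N a v) = act k N a (φ v)) →
      ∃ c : k, φ = c • LinearMap.id := by
  classical
  intro φ hφ
  set i0 : Fin N := ⟨0, hN⟩ with hi0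
  set P : (Fin N → Polynomial k) →ₗ[k] (Fin N → Polynomial k) := CentAux.Pm with hP
  -- the span of the image of the action of S
  set G : Set (Fin N → Polynomial k) := {w | ∃ a ∈ S, ∃ v, w = act k N a v} with hG
  have hGinv : ∀ b ∈ S, ∀ u ∈ Submodule.span k G, act k N b u ∈ Submodule.span k G := by
    intro b hb u hu
    induction hu using Submodule.span_induction with
    | mem x hx =>
        obtain ⟨a, ha, v, rfl⟩ := hx
        exact Submodule.subset_span ⟨b * a, mul_mem hb ha, v, (CentAux.act_mul b a v).symm⟩
    | zero => rw [← CentAux.actL_apply, map_zero]; exact zero_mem _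
    | add x y hx hy ihx ihy =>
        rw [← CentAux.actL_apply, map_add]; exact add_mem ihx ihy
    | smul c x hx ihx =>
        rw [← CentAux.actL_apply, map_smul]; exact Submodule.smul_mem _ _ ihx
  have hGtop : Submodule.span k G = ⊤ := by
    rcases hirr _ hGinv with hbot | htop
    · exfalso
      have hz : ∀ a ∈ S, ∀ v, act k N a v = 0 := by
        intro a ha v
        have : act k N a v ∈ Submodule.span k G := Submodule.subset_span ⟨a, ha, v, rfl⟩
        rw [hbot] at this; simpa using this
      set v0 : Fin N → Polynomial k := fun _ => 1 with hv0
      rcases hirr (Submodule.span k {v0}) (by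
        intro a ha u hu; rw [hz a ha]; exact zero_mem _) with h1 | h1
      · have : v0 ∈ Submodule.span k {v0} := Submodule.mem_span_singleton_self v0
        rw [h1] at this
        have := congrFun (Submodule.mem_bot k |>.mp this) i0
        simpa [hv0] using this
      · have : (fun _ => (X : Polynomial k)) ∈ Submodule.span k {v0} := by
          rw [h1]; trivial
        obtain ⟨c, hc⟩ := Submodule.mem_span_singleton.mp this
        have := congrFun hc i0
        simp only [hv0, Pi.smul_apply, smul_eq_C_mul, mul_one] at this
        have h2 := congrArg (fun p => Polynomial.coeff p 1) this
        simp [Polynomial.coeff_C] at h2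
    · exact htop
  -- φ commutes with P
  have hPφ : ∀ v, φ (P v) = P (φ v) := by
    intro v
    have hv : v ∈ Submodule.span k G := by rw [hGtop]; trivial
    induction hv using Submodule.span_induction with
    | mem x hx =>
        obtain ⟨a, ha, u, rfl⟩ := hx
        rw [hP, ← CentAux.act_pM, hφ _ (hpS a ha), CentAux.act_pM, hφ _ ha]
    | zero => simp
    | add x y hx hy ihx ihy => simp [map_add, ihx, ihy]
    | smul c x hx ihx => simp [map_smul, ihx]
  -- evaluation at 0 and constants
  set π : (Fin N → Polynomial k) →ₗ[k] (Fin N → k) :=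
    { toFun := fun v i => (v i).coeff 0
      map_add' := by intro u v; funext i; simp
      map_smul' := by intro c v; funext i; simp } with hπdef
  set ι : (Fin N → k) →ₗ[k] (Fin N → Polynomial k) :=
    { toFun := fun w i => Polynomial.C (w i)
      map_add' := by intro u v; funext i; simp
      map_smul' := by intro c v; funext i; simp [Polynomial.smul_C] } with hιdef
  have hπι : ∀ w, π (ι w) = w := by intro w; funext i; simp [hπdef, hιdef]
  have hπP : ∀ v, π (P v) = 0 := by
    intro v; funext i
    simp [hπdef, hP, CentAux.Pm, Polynomial.mul_coeff_zero]
  have hdec : ∀ v : Fin N → Polynomial k, v = ι (π v) + P (fun i => (v i).divX) := by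
    intro v; funext i
    simp only [hπdef, hιdef, hP, CentAux.Pm, Pi.add_apply, LinearMap.coe_mk, AddHom.coe_mk]
    rw [add_comm, X_mul_divX_add]
  set B : Module.End k (Fin N → k) := π ∘ₗ φ ∘ₗ ι with hB
  have hπφ : ∀ v, π (φ v) = B (π v) := by
    intro v
    conv_lhs => rw [hdec v, map_add, map_add, hPφ, hπP]
    simp [hB]
  -- eigenvalue of B
  have : Nontrivial (Fin N → k) := ⟨⟨fun _ => 0, fun _ => 1, by
    intro h; have := congrFun h i0; simp at this⟩⟩
  obtain ⟨c0, hc0⟩ := Module.End.exists_eigenvalue B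
  obtain ⟨w, hw⟩ := hc0.exists_hasEigenvector
  have hBw : B w = c0 • w := Module.End.mem_eigenspace_iff.mp hw.1
  refine ⟨c0, ?_⟩
  set ψ : (Fin N → Polynomial k) →ₗ[k] (Fin N → Polynomial k) :=
    φ - c0 • LinearMap.id with hψdef
  have hψS : ∀ a ∈ S, ∀ v, ψ (act k N a v) = act k N a (ψ v) := by
    intro a ha v
    simp only [hψdef, LinearMap.sub_apply, LinearMap.smul_apply, LinearMap.id_apply]
    rw [hφ a ha, ← CentAux.actL_apply, ← CentAux.actL_apply, ← CentAux.actL_apply,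
      map_sub, map_smul]
  have hψP : ∀ v, ψ (P v) = P (ψ v) := by
    intro v
    simp only [hψdef, LinearMap.sub_apply, LinearMap.smul_apply, LinearMap.id_apply,
      hPφ, map_sub, map_smul]
  have hψzero : ψ = 0 → φ = c0 • LinearMap.id := by
    intro h; have := sub_eq_zero.mp h; exact this
  rcases hirr (LinearMap.ker ψ) (by
      intro a ha u hu
      rw [LinearMap.mem_ker] at hu ⊢
      rw [hψS a ha, hu, ← CentAux.actL_apply, map_zero]) with hk | hk
  swap
  · exact hψzero (LinearMap.ker_eq_top.mp hk)
  rcases hirr (LinearMap.range ψ) (by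
      intro a ha u hu
      obtain ⟨v, rfl⟩ := hu
      exact ⟨act k N a v, hψS a ha v⟩) with hr | hr
  · exact hψzero (LinearMap.range_eq_bot.mp hr)
  -- ψ bijective: contradiction with the eigenvector
  exfalso
  have hinj : Function.Injective ψ := LinearMap.ker_eq_bot.mp hk
  have hsurj : Function.Surjective ψ := LinearMap.range_eq_top.mp hr
  have hπψ : ∀ v, π (ψ v) = B (π v) - c0 • π v := by
    intro v
    simp only [hψdef, LinearMap.sub_apply, LinearMap.smul_apply, LinearMap.id_apply,
      map_sub, map_smul, hπφ]
  have h1 : π (ψ (ι w)) = 0 := by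
    rw [hπψ, hπι, hBw, sub_self]
  have h2 : ψ (ι w) = P (fun i => ((ψ (ι w)) i).divX) := by
    funext i
    have hc : ((ψ (ι w)) i).coeff 0 = 0 := congrFun h1 i
    conv_lhs => rw [← X_mul_divX_add (ψ (ι w) i)]
    simp [hc, hP, CentAux.Pm]
  obtain ⟨u', hu'⟩ := hsurj (fun i => ((ψ (ι w)) i).divX)
  have h3 : ψ (ι w) = ψ (P u') := by rw [hψP u', hu']; exact h2
  have h4 : ι w = P u' := hinj h3
  have h5 : w = 0 := by
    funext i
    have := congrFun h4 i
    simp only [hιdef, hP, CentAux.Pm, LinearMap.coe_mk, AddHom.coe_mk] at this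
    have := congrArg (fun p => Polynomial.coeff p 0) this
    simpa [Polynomial.mul_coeff_zero] using this
  exact hw.2 h5

end
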